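/- arXiv:math/0510020 — 3 statements merged into one kernel-verified Lean document; each statement's English description precedes it below -/
import Mathlib

section
/- Let A and B be N \times m complex matrices with columns indexed by 1..m, and set u_{jl} = \sum_{\alpha=1}^m A_{\alpha j} \overline{B_{\alpha l}}. Then \sum_{\alpha,\beta=1}^m (\sum_{j=1}^N A_{\alpha j}\overline{A_{\beta j}})(\sum_{l=1}^N B_{\beta l}\overline{B_{\alpha l}}) - \sum_{\alpha,\beta=1}^m (\sum_{j=1}^N A_{\alpha j} B_{\beta j})(\sum_{l=1}^N \overline{A_{\beta l}}\,\overline{B_{\alpha l}}) = \sum_{j<l} |u_{jl} - u_{lj}|^2 \ge 0. -/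
open Finset

private lemma sum4_comm {m N : ℕ} (f : Fin m → Fin m → Fin N → Fin N → ℂ) :
    ∑ α, ∑ β, ∑ j, ∑ l, f α β j l = ∑ j, ∑ l, ∑ α, ∑ β, f α β j l := by
  calc ∑ α, ∑ β, ∑ j, ∑ l, f α β j l
      = ∑ α, ∑ j, ∑ β, ∑ l, f α β j l :=
        Finset.sum_congr rfl fun α _ => Finset.sum_comm
    _ = ∑ j, ∑ α, ∑ β, ∑ l, f α β j l := Finset.sum_comm
    _ = ∑ j, ∑ α, ∑ l, ∑ β, f α β j l :=
        Finset.sum_congr rfl fun j _ => Finset.sum_congr rfl fun α _ => Finset.sum_comm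
    _ = ∑ j, ∑ l, ∑ α, ∑ β, f α β j l :=
        Finset.sum_congr rfl fun j _ => Finset.sum_comm

private lemma split_lt {N : ℕ} (f : Fin N → Fin N → ℂ) (hf : ∀ j, f j j = 0) :
    ∑ j, ∑ l, f j l = ∑ j, ∑ l, (if j < l then f j l + f l j else 0) := by
  have h1 : ∑ j, ∑ l, f j l
      = (∑ j, ∑ l, (if j < l then f j l else 0)) + ∑ j, ∑ l, (if l < j then f j l else 0) := by
    rw [← Finset.sum_add_distrib]
    refine Finset.sum_congr rfl fun j _ => ?_
    rw [← Finset.sum_add_distrib]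
    refine Finset.sum_congr rfl fun l _ => ?_
    rcases lt_trichotomy j l with h | h | h
    · simp [h, not_lt.mpr h.le]
    · simp [h, hf]
    · simp [h, not_lt.mpr h.le]
  have h2 : (∑ j, ∑ l, (if l < j then f j l else 0))
      = ∑ j, ∑ l, (if j < l then f l j else 0) := Finset.sum_comm
  rw [h1, h2, ← Finset.sum_add_distrib]
  refine Finset.sum_congr rfl fun j _ => ?_
  rw [← Finset.sum_add_distrib]
  refine Finset.sum_congr rfl fun l _ => ?_
  by_cases h : j < l <;> simp [h]

/-- The key algebraic nonnegativity (4.14)–(4.15): with `u j l = ∑ α, A α j * conj (B α l)`,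
`∑_{α,β} (∑_j A_{αj} conj A_{βj})(∑_l B_{βl} conj B_{αl})
  - ∑_{α,β} (∑_j A_{αj} B_{βj})(∑_l conj A_{βl} · conj B_{αl}) = ∑_{j<l} |u_{jl} - u_{lj}|² ≥ 0`. -/
theorem stmt_4 (m N : ℕ) (A B : Fin m → Fin N → ℂ) (u : Fin N → Fin N → ℂ)
    (hu : ∀ j l, u j l = ∑ α, A α j * starRingEnd ℂ (B α l)) :
    ((∑ α, ∑ β, (∑ j, A α j * starRingEnd ℂ (A β j)) * (∑ l, B β l * starRingEnd ℂ (B α l)))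
      - ∑ α, ∑ β, (∑ j, A α j * B β j) * (∑ l, starRingEnd ℂ (A β l) * starRingEnd ℂ (B α l))
      = ((∑ j, ∑ l, if j < l then ‖u j l - u l j‖ ^ 2 else 0 : ℝ) : ℂ)) ∧
    (0 : ℝ) ≤ ∑ j, ∑ l, if j < l then ‖u j l - u l j‖ ^ 2 else 0 := by
  have hpos : (0 : ℝ) ≤ ∑ j, ∑ l, if j < l then ‖u j l - u l j‖ ^ 2 else 0 := by
    refine Finset.sum_nonneg fun j _ => Finset.sum_nonneg fun l _ => ?_
    by_cases h : j < l <;> simp [h] <;> positivity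
  refine ⟨?_, hpos⟩
  let c := starRingEnd ℂ
  show (∑ α, ∑ β, (∑ j, A α j * c (A β j)) * (∑ l, B β l * c (B α l)))
      - ∑ α, ∑ β, (∑ j, A α j * B β j) * (∑ l, c (A β l) * c (B α l))
      = ((∑ j, ∑ l, if j < l then ‖u j l - u l j‖ ^ 2 else 0 : ℝ) : ℂ)
  have hT1 : (∑ α, ∑ β, (∑ j, A α j * c (A β j)) * (∑ l, B β l * c (B α l)))
      = ∑ j, ∑ l, u j l * c (u j l) := by
    have : (∑ α, ∑ β, (∑ j, A α j * c (A β j)) * (∑ l, B β l * c (B α l)))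
        = ∑ α, ∑ β, ∑ j, ∑ l, (A α j * c (A β j)) * (B β l * c (B α l)) := by
      refine Finset.sum_congr rfl fun α _ => Finset.sum_congr rfl fun β _ => ?_
      rw [Finset.sum_mul_sum]
    rw [this, sum4_comm]
    refine Finset.sum_congr rfl fun j _ => Finset.sum_congr rfl fun l _ => ?_
    rw [hu]
    simp only [c, map_sum, map_mul, Complex.conj_conj]
    rw [Finset.sum_mul_sum]
    refine Finset.sum_congr rfl fun α _ => Finset.sum_congr rfl fun β _ => ?_
    ring
  have hT2 : (∑ α, ∑ β, (∑ j, A α j * B β j) * (∑ l, c (A β l) * c (B α l)))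
      = ∑ j, ∑ l, u j l * c (u l j) := by
    have : (∑ α, ∑ β, (∑ j, A α j * B β j) * (∑ l, c (A β l) * c (B α l)))
        = ∑ α, ∑ β, ∑ j, ∑ l, (A α j * B β j) * (c (A β l) * c (B α l)) := by
      refine Finset.sum_congr rfl fun α _ => Finset.sum_congr rfl fun β _ => ?_
      rw [Finset.sum_mul_sum]
    rw [this, sum4_comm]
    refine Finset.sum_congr rfl fun j _ => Finset.sum_congr rfl fun l _ => ?_
    -- note: here the inner indices j,l are the old (j,l) but we need u j l * c (u l j)
    rw [hu, hu]
    simp only [c, map_sum, map_mul, Complex.conj_conj]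
    rw [Finset.sum_mul_sum]
    refine Finset.sum_congr rfl fun α _ => Finset.sum_congr rfl fun β _ => ?_
    ring
  rw [hT1, hT2, ← Finset.sum_sub_distrib]
  simp only [← Finset.sum_sub_distrib]
  have hdiag : ∀ j : Fin N, u j j * c (u j j) - u j j * c (u j j) = 0 := fun j => sub_self _
  rw [split_lt (fun j l => u j l * c (u j l) - u j l * c (u l j)) (fun j => sub_self _)]
  rw [Complex.ofReal_sum]
  refine Finset.sum_congr rfl fun j _ => ?_
  rw [Complex.ofReal_sum]
  refine Finset.sum_congr rfl fun l _ => ?_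
  by_cases h : j < l
  · simp only [h, if_true]
    rw [show (‖u j l - u l j‖ ^ 2 : ℝ) = Complex.normSq (u j l - u l j) from
      Complex.sq_norm _, ← Complex.mul_conj]
    simp only [map_sub, c]
    ring
  · simp [h]
end

section
/- Let f(z, \bar z) be a real-valued homogeneous polynomial of degree 2k in z and \bar z (with k a positive integer) such that -\partial_z \partial_{\bar z} f(z, \bar z) \ge 0 for all z, f contains no z^{2k} or \bar z^{2k} terms, and \partial_z \partial_{\bar z} \log(-\partial_z \partial_{\bar z} f) \equiv 0 wherever \partial_z \partial_{\bar z} f \ne 0. Then f(z, \bar z) = c |z|^{2k} for some real constant c. -/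
open Finset

private lemma aux_circle_term (z : ℂ) (hz : z * (starRingEnd ℂ) z = 1) (b : ℂ) (e i m r : ℕ)
    (h : e + i = r + m) :
    z ^ e * (b * z ^ i * (starRingEnd ℂ) z ^ m) = b * z ^ r := by
  have hz0 : z ≠ 0 := by rintro rfl; simp at hz
  have h1 : (starRingEnd ℂ) z ^ m * z ^ m = 1 := by
    rw [← mul_pow, mul_comm, hz, one_pow]
  apply mul_right_cancel₀ (pow_ne_zero m hz0)
  calc z ^ e * (b * z ^ i * (starRingEnd ℂ) z ^ m) * z ^ m
      = b * (z ^ e * z ^ i) * ((starRingEnd ℂ) z ^ m * z ^ m) := by ring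
    _ = b * z ^ (e + i) := by rw [h1, mul_one, pow_add]
    _ = b * z ^ (r + m) := by rw [h]
    _ = b * z ^ r * z ^ m := by rw [pow_add, mul_assoc]

private lemma aux_zero_of_circle (P : Polynomial ℂ) (h : ∀ z : ℂ, ‖z‖ = 1 → P.eval z = 0) :
    P = 0 := by
  apply P.eq_zero_of_infinite_isRoot
  have hsub : (fun t : ℝ => Complex.exp (t * Complex.I)) '' Set.Ioo 0 1 ⊆ {x | P.IsRoot x} := by
    rintro z ⟨t, _, rfl⟩
    exact h _ (by simp [Complex.norm_exp_ofReal_mul_I t])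
  refine Set.Infinite.mono hsub
    (Set.Infinite.image ?_ (Set.infinite_coe_iff.mp (Set.Ioo.infinite (by norm_num))))
  intro s hs t ht hst
  rw [Complex.exp_eq_exp_iff_exists_int] at hst
  obtain ⟨m, hm⟩ := hst
  have h2 : (s : ℂ) = t + m * (2 * Real.pi) :=
    mul_right_cancel₀ Complex.I_ne_zero (by rw [hm]; ring)
  have h3 : s = t + m * (2 * Real.pi) := by exact_mod_cast h2
  have hm0 : m = 0 := by
    by_contra h0
    have h1 : (1:ℝ) ≤ |(m:ℝ)| := by
      rw [← Int.cast_abs]; exact_mod_cast Int.one_le_abs h0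
    have habs : |s - t| = |(m:ℝ)| * (2*Real.pi) := by
      rw [show s - t = m * (2*Real.pi) by linarith, abs_mul,
        abs_of_pos (by positivity : (0:ℝ) < 2*Real.pi)]
    have h4 : |s - t| < 1 := by
      rw [abs_lt]; constructor <;>
        [linarith [hs.1, ht.2]; linarith [hs.2, ht.1]]
    nlinarith [Real.pi_gt_three]
  rw [hm0] at h3; simpa using h3

private lemma aux_coeff (m t : ℕ) (g : ℕ → ℂ) (ht : t < m) :
    (∑ j ∈ Finset.range m, Polynomial.C (g j) * Polynomial.X ^ (2*j)).coeff (2*t) = g t := by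
  rw [Polynomial.finset_sum_coeff]
  rw [Finset.sum_eq_single t]
  · simp
  · intro b _ hb
    rw [Polynomial.coeff_C_mul, Polynomial.coeff_X_pow, if_neg (by omega), mul_zero]
  · intro h; exact absurd (Finset.mem_range.2 ht) h


/-- Lemma 7.6: a real-valued homogeneous polynomial
`f(z,z̄) = ∑_{p=0}^{2k} c_p z^p z̄^{2k-p}` of degree `2k` with no `z^{2k}` or `z̄^{2k}` terms,
with `u := -∂_z∂_{z̄} f ≥ 0` everywhere and `∂_z∂_{z̄} log u = 0` wherever `u ≠ 0`
(equivalently `u·∂_z∂_{z̄}u - ∂_z u·∂_{z̄}u = 0`), must be of the form `f = c·|z|^{2k}`. -/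
theorem stmt_8 (k : ℕ) (hk : 0 < k) (c : ℕ → ℂ)
    (f u uz uzb uzzb : ℂ → ℂ)
    -- f(z) = ∑_{p=0}^{2k} c_p z^p z̄^{2k-p}
    (hf : ∀ z, f z = ∑ p ∈ Finset.range (2 * k + 1),
        c p * z ^ p * (starRingEnd ℂ z) ^ (2 * k - p))
    -- f is real-valued: c_{2k-p} = conj c_p
    (hreal : ∀ p ≤ 2 * k, c (2 * k - p) = starRingEnd ℂ (c p))
    -- no z^{2k} or z̄^{2k} terms
    (hc0 : c 0 = 0) (hc2k : c (2 * k) = 0)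
    -- u = -∂_z ∂_{z̄} f, a homogeneous polynomial of degree 2k-2
    (hu : ∀ z, u z = ∑ j ∈ Finset.range (2 * k - 1),
        (-(c (j + 1) * ((j : ℂ) + 1) * ((2 * k - 1 - j : ℕ) : ℂ))) *
          z ^ j * (starRingEnd ℂ z) ^ (2 * k - 2 - j))
    -- uz = ∂_z u
    (huz : ∀ z, uz z = ∑ j ∈ Finset.range (2 * k - 1),
        (-(c (j + 1) * ((j : ℂ) + 1) * ((2 * k - 1 - j : ℕ) : ℂ))) * (j : ℂ) *
          z ^ (j - 1) * (starRingEnd ℂ z) ^ (2 * k - 2 - j))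
    -- uzb = ∂_{z̄} u
    (huzb : ∀ z, uzb z = ∑ j ∈ Finset.range (2 * k - 1),
        (-(c (j + 1) * ((j : ℂ) + 1) * ((2 * k - 1 - j : ℕ) : ℂ))) *
          ((2 * k - 2 - j : ℕ) : ℂ) * z ^ j * (starRingEnd ℂ z) ^ (2 * k - 3 - j))
    -- uzzb = ∂_z ∂_{z̄} u
    (huzzb : ∀ z, uzzb z = ∑ j ∈ Finset.range (2 * k - 1),
        (-(c (j + 1) * ((j : ℂ) + 1) * ((2 * k - 1 - j : ℕ) : ℂ))) * (j : ℂ) *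
          ((2 * k - 2 - j : ℕ) : ℂ) * z ^ (j - 1) * (starRingEnd ℂ z) ^ (2 * k - 3 - j))
    -- -∂_z∂_{z̄} f ≥ 0 everywhere
    (hupos : ∀ z, 0 ≤ (u z).re)
    -- ∂_z∂_{z̄} log u ≡ 0 wherever u ≠ 0
    (hlog : ∀ z, u z ≠ 0 → u z * uzzb z - uz z * uzb z = 0) :
    ∃ C : ℝ, ∀ z, f z = (C : ℂ) * (‖z‖ : ℂ) ^ (2 * k) := by
  classical
  obtain ⟨a, ha⟩ : ∃ a : ℕ → ℂ, ∀ j : ℕ,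
      a j = -(c (j + 1) * ((j : ℂ) + 1) * ((2 * k - 1 - j : ℕ) : ℂ)) := ⟨_, fun _ => rfl⟩
  have ha_zero_top : ∀ j, 2 * k - 1 ≤ j → a j = 0 := by
    intro j hj
    rw [ha, show 2 * k - 1 - j = 0 from by omega]
    simp
  have ha_real : ∀ j ≤ 2 * k - 2, a (2 * k - 2 - j) = starRingEnd ℂ (a j) := by
    intro j hj
    rw [ha, ha]
    rw [show 2 * k - 2 - j + 1 = 2 * k - 1 - j from by omega,
      show 2 * k - 1 - (2 * k - 2 - j) = j + 1 from by omega]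
    have h1 : c (2 * k - 1 - j) = starRingEnd ℂ (c (j + 1)) := by
      rw [show 2 * k - 1 - j = 2 * k - (j + 1) from by omega]
      exact hreal (j + 1) (by omega)
    rw [h1]
    simp only [map_neg, map_mul, Complex.conj_natCast, map_add, Complex.conj_natCast,
      map_one]
    have h2 : ((2 * k - 2 - j : ℕ) : ℂ) + 1 = ((2 * k - 1 - j : ℕ) : ℂ) := by
      have hcast : ((2 * k - 2 - j : ℕ) : ℂ) + 1 = ((2 * k - 2 - j + 1 : ℕ) : ℂ) := by
        push_cast; ring
      rw [hcast, show 2 * k - 2 - j + 1 = 2 * k - 1 - j from by omega]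
    have h3 : ((j + 1 : ℕ) : ℂ) = (j : ℂ) + 1 := by push_cast; ring
    rw [h2, h3]
    ring
  -- the key reduction
  suffices hsuff : ∀ j : ℕ, j ≠ k - 1 → a j = 0 by
    have hcp : ∀ p, 1 ≤ p → p ≤ 2 * k - 1 → p ≠ k → c p = 0 := by
      intro p hp1 hp2 hpk
      have h := hsuff (p - 1) (by omega)
      rw [ha, show p - 1 + 1 = p from by omega] at h
      have hA : ((p - 1 : ℕ) : ℂ) + 1 ≠ 0 := by
        have hcast : ((p - 1 : ℕ) : ℂ) + 1 = ((p - 1 + 1 : ℕ) : ℂ) := by push_cast; ring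
        rw [hcast, show p - 1 + 1 = p from by omega]
        exact Nat.cast_ne_zero.mpr (by omega)
      have hB : ((2 * k - 1 - (p - 1) : ℕ) : ℂ) ≠ 0 := Nat.cast_ne_zero.mpr (by omega)
      have h' : c p * (((p - 1 : ℕ) : ℂ) + 1) * ((2 * k - 1 - (p - 1) : ℕ) : ℂ) = 0 := by
        have := neg_eq_zero.mp h
        exact this
      rcases mul_eq_zero.mp h' with h'' | h''
      · rcases mul_eq_zero.mp h'' with h3 | h3
        · exact h3
        · exact absurd h3 hA
      · exact absurd h'' hB
    refine ⟨(c k).re, fun z => ?_⟩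
    have hck : ((c k).re : ℂ) = c k := by
      apply Complex.conj_eq_iff_re.mp
      have := hreal k (by omega)
      rw [show 2 * k - k = k from by omega] at this
      exact this.symm
    rw [hf z, Finset.sum_eq_single k]
    · rw [show 2 * k - k = k from by omega, hck]
      rw [mul_assoc, ← mul_pow, Complex.mul_conj]
      have hns : ((Complex.normSq z : ℝ) : ℂ) = ((‖z‖ : ℂ)) ^ 2 := by
        rw [← Complex.sq_norm]
        push_cast
        ring
      rw [hns, ← pow_mul]
    · intro p hp hpk
      rcases Nat.eq_zero_or_pos p with rfl | hp1
      · rw [hc0]; ring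
      rcases eq_or_ne p (2 * k) with rfl | hp2
      · rw [hc2k]; ring
      · rw [hcp p hp1 (by have := Finset.mem_range.mp hp; omega) hpk]; ring
    · intro h; exact absurd (Finset.mem_range.mpr (by omega)) h
  -- now prove hsuff
  rcases eq_or_lt_of_le (Nat.succ_le_of_lt hk) with hk1 | hk2
  · -- k = 1
    intro j hj
    exact ha_zero_top j (by omega)
  -- k ≥ 2
  have hk2' : 2 ≤ k := hk2
  set N := 2 * k - 1 with hN
  -- normalized hypotheses
  have hu' : ∀ z, u z = ∑ j ∈ Finset.range N, a j * z ^ j * (starRingEnd ℂ z) ^ (2 * k - 2 - j) := by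
    intro z; rw [hu z]; exact Finset.sum_congr rfl fun j _ => by rw [ha]
  have huz' : ∀ z, uz z = ∑ j ∈ Finset.range N,
      a j * (j : ℂ) * z ^ (j - 1) * (starRingEnd ℂ z) ^ (2 * k - 2 - j) := by
    intro z; rw [huz z]; exact Finset.sum_congr rfl fun j _ => by rw [ha]
  have huzb' : ∀ z, uzb z = ∑ j ∈ Finset.range N,
      a j * ((2 * k - 2 - j : ℕ) : ℂ) * z ^ j * (starRingEnd ℂ z) ^ (2 * k - 3 - j) := by
    intro z; rw [huzb z]; exact Finset.sum_congr rfl fun j _ => by rw [ha]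
  have huzzb' : ∀ z, uzzb z = ∑ j ∈ Finset.range N,
      a j * (j : ℂ) * ((2 * k - 2 - j : ℕ) : ℂ) * z ^ (j - 1) *
        (starRingEnd ℂ z) ^ (2 * k - 3 - j) := by
    intro z; rw [huzzb z]; exact Finset.sum_congr rfl fun j _ => by rw [ha]
  -- polynomials
  set q : Polynomial ℂ := ∑ j ∈ Finset.range N, Polynomial.C (a j) * Polynomial.X ^ (2 * j)
    with hqdef
  set p1 : Polynomial ℂ := ∑ j ∈ Finset.range N,
    Polynomial.C (a j * (j : ℂ)) * Polynomial.X ^ (2 * j) with hp1def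
  set p2 : Polynomial ℂ := ∑ j ∈ Finset.range N,
    Polynomial.C (a j * ((2 * k - 2 - j : ℕ) : ℂ)) * Polynomial.X ^ (2 * j) with hp2def
  set p3 : Polynomial ℂ := ∑ j ∈ Finset.range N,
    Polynomial.C (a j * (j : ℂ) * ((2 * k - 2 - j : ℕ) : ℂ)) * Polynomial.X ^ (2 * j) with hp3def
  have hqeval : ∀ z : ℂ, z * starRingEnd ℂ z = 1 → q.eval z = z ^ (2 * k - 2) * u z := by
    intro z hz
    rw [hqdef, hu' z, Polynomial.eval_finset_sum, Finset.mul_sum]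
    refine Finset.sum_congr rfl fun j hj => ?_
    rw [Polynomial.eval_mul, Polynomial.eval_C, Polynomial.eval_pow, Polynomial.eval_X]
    exact (aux_circle_term z hz (a j) (2 * k - 2) j (2 * k - 2 - j) (2 * j)
      (by have := Finset.mem_range.mp hj; omega)).symm
  have hp1eval : ∀ z : ℂ, z * starRingEnd ℂ z = 1 → p1.eval z = z ^ (2 * k - 1) * uz z := by
    intro z hz
    rw [hp1def, huz' z, Polynomial.eval_finset_sum, Finset.mul_sum]
    refine Finset.sum_congr rfl fun j hj => ?_
    rw [Polynomial.eval_mul, Polynomial.eval_C, Polynomial.eval_pow, Polynomial.eval_X]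
    rcases Nat.eq_zero_or_pos j with rfl | hj1
    · simp
    · exact (aux_circle_term z hz (a j * (j : ℂ)) (2 * k - 1) (j - 1) (2 * k - 2 - j) (2 * j)
        (by have := Finset.mem_range.mp hj; omega)).symm
  have hp2eval : ∀ z : ℂ, z * starRingEnd ℂ z = 1 → p2.eval z = z ^ (2 * k - 3) * uzb z := by
    intro z hz
    rw [hp2def, huzb' z, Polynomial.eval_finset_sum, Finset.mul_sum]
    refine Finset.sum_congr rfl fun j hj => ?_
    rw [Polynomial.eval_mul, Polynomial.eval_C, Polynomial.eval_pow, Polynomial.eval_X]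
    rcases le_or_gt (2 * k - 2) j with hj1 | hj1
    · rw [show 2 * k - 2 - j = 0 from by omega]
      simp
    · exact (aux_circle_term z hz (a j * ((2 * k - 2 - j : ℕ) : ℂ)) (2 * k - 3) j
        (2 * k - 3 - j) (2 * j) (by omega)).symm
  have hp3eval : ∀ z : ℂ, z * starRingEnd ℂ z = 1 → p3.eval z = z ^ (2 * k - 2) * uzzb z := by
    intro z hz
    rw [hp3def, huzzb' z, Polynomial.eval_finset_sum, Finset.mul_sum]
    refine Finset.sum_congr rfl fun j hj => ?_
    rw [Polynomial.eval_mul, Polynomial.eval_C, Polynomial.eval_pow, Polynomial.eval_X]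
    rcases Nat.eq_zero_or_pos j with rfl | hj1
    · simp
    rcases le_or_gt (2 * k - 2) j with hj2 | hj2
    · rw [show 2 * k - 2 - j = 0 from by omega]
      simp
    · exact (aux_circle_term z hz (a j * (j : ℂ) * ((2 * k - 2 - j : ℕ) : ℂ)) (2 * k - 2)
        (j - 1) (2 * k - 3 - j) (2 * j) (by omega)).symm
  -- the product polynomial vanishes on the circle
  have hP : q * (q * p3 - p1 * p2) = 0 := by
    apply aux_zero_of_circle
    intro z hz
    have hz1 : z * starRingEnd ℂ z = 1 := by
      have hn : Complex.normSq z = 1 := by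
        rw [Complex.normSq_eq_norm_sq, hz]; norm_num
      rw [Complex.mul_conj, hn, Complex.ofReal_one]
    rw [Polynomial.eval_mul, Polynomial.eval_sub, Polynomial.eval_mul, Polynomial.eval_mul]
    by_cases hu0 : u z = 0
    · rw [hqeval z hz1, hu0, mul_zero, zero_mul]
    · have hpow : z ^ (2 * k - 1) * z ^ (2 * k - 3) = z ^ (2 * k - 2) * z ^ (2 * k - 2) := by
        rw [← pow_add, ← pow_add]
        congr 1
        omega
      rw [hqeval z hz1, hp1eval z hz1, hp2eval z hz1, hp3eval z hz1]
      have : z ^ (2 * k - 2) * u z * (z ^ (2 * k - 2) * uzzb z) -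
          z ^ (2 * k - 1) * uz z * (z ^ (2 * k - 3) * uzb z) =
          z ^ (2 * k - 2) * z ^ (2 * k - 2) * (u z * uzzb z - uz z * uzb z) := by
        linear_combination (-(uz z * uzb z)) * hpow
      rw [this, hlog z hu0, mul_zero, mul_zero]
  rcases mul_eq_zero.mp hP with hq0 | hR0
  · -- q = 0 : all coefficients vanish
    intro j _
    rcases lt_or_ge j N with hj | hj
    · have h := aux_coeff N j a hj
      rw [← hqdef, hq0] at h
      simpa using h.symm
    · exact ha_zero_top j (by omega)
  · -- q * p3 - p1 * p2 = 0
    have hR_repr : q * p3 - p1 * p2 = ∑ i ∈ Finset.range N, ∑ j ∈ Finset.range N,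
        Polynomial.C (a i * a j * ((j : ℂ) - (i : ℂ)) * ((2 * k - 2 - j : ℕ) : ℂ)) *
          Polynomial.X ^ (2 * (i + j)) := by
      rw [hqdef, hp1def, hp2def, hp3def, Finset.sum_mul_sum, Finset.sum_mul_sum,
        ← Finset.sum_sub_distrib]
      refine Finset.sum_congr rfl fun i _ => ?_
      rw [← Finset.sum_sub_distrib]
      refine Finset.sum_congr rfl fun j _ => ?_
      rw [show 2 * (i + j) = 2 * i + 2 * j from by ring, pow_add]
      simp only [map_mul, map_sub]
      ring
    have hS : ∀ s : ℕ, ∑ i ∈ Finset.range N, ∑ j ∈ Finset.range N,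
        (if i + j = s then a i * a j * ((j : ℂ) - (i : ℂ)) * ((2 * k - 2 - j : ℕ) : ℂ)
          else 0) = 0 := by
      intro s
      have h0 : (∑ i ∈ Finset.range N, ∑ j ∈ Finset.range N,
          Polynomial.C (a i * a j * ((j : ℂ) - (i : ℂ)) * ((2 * k - 2 - j : ℕ) : ℂ)) *
            Polynomial.X ^ (2 * (i + j))).coeff (2 * s) = 0 := by
        rw [← hR_repr, hR0, Polynomial.coeff_zero]
      rw [Polynomial.finset_sum_coeff] at h0
      calc ∑ i ∈ Finset.range N, ∑ j ∈ Finset.range N,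
            (if i + j = s then a i * a j * ((j : ℂ) - (i : ℂ)) * ((2 * k - 2 - j : ℕ) : ℂ)
              else 0)
          = ∑ i ∈ Finset.range N, (∑ j ∈ Finset.range N,
              Polynomial.C (a i * a j * ((j : ℂ) - (i : ℂ)) * ((2 * k - 2 - j : ℕ) : ℂ)) *
                Polynomial.X ^ (2 * (i + j))).coeff (2 * s) := by
            refine Finset.sum_congr rfl fun i _ => ?_
            rw [Polynomial.finset_sum_coeff]
            refine Finset.sum_congr rfl fun j _ => ?_
            rw [Polynomial.coeff_C_mul, Polynomial.coeff_X_pow]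
            by_cases hij : i + j = s
            · rw [if_pos hij, if_pos (by omega), mul_one]
            · rw [if_neg hij, if_neg (by omega), mul_zero]
        _ = 0 := h0
    by_cases hall : ∀ j, a j = 0
    · intro j _; exact hall j
    push_neg at hall
    have hex : ∃ j, a j ≠ 0 := hall
    set l := Nat.find hex with hldef
    have hl : a l ≠ 0 := Nat.find_spec hex
    have hmin : ∀ m, m < l → a m = 0 := by
      intro m hm
      by_contra h
      exact absurd (Nat.find_le h) (not_le.mpr hm)
    have hl_le : l ≤ 2 * k - 2 := by
      by_contra h
      exact hl (ha_zero_top l (by omega))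
    have hl_mem : l ∈ Finset.range N := Finset.mem_range.mpr (by omega)
    have hl_tail : ∀ j, l < j → a j = 0 := by
      intro j
      induction j using Nat.strong_induction_on with
      | _ j IH =>
        intro hlj
        rcases le_or_gt N j with hjN | hjN
        · exact ha_zero_top j hjN
        have hj_le : j ≤ 2 * k - 2 := by omega
        have hs := hS (l + j)
        have hj_mem : j ∈ Finset.range N := Finset.mem_range.mpr hjN
        -- other outer terms vanish
        have houter : ∀ i ∈ Finset.range N, i ≠ l ∧ i ≠ j →
            (∑ j' ∈ Finset.range N, if i + j' = l + j then
              a i * a j' * ((j' : ℂ) - (i : ℂ)) * ((2 * k - 2 - j' : ℕ) : ℂ) else 0) = 0 := by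
          intro i _ hpair
          obtain ⟨hil, hij⟩ := hpair
          apply Finset.sum_eq_zero
          intro j' _
          by_cases hcond : i + j' = l + j
          · rw [if_pos hcond]
            rcases lt_trichotomy i l with h' | h' | h'
            · rw [hmin i h']; ring
            · exact absurd h' hil
            rcases lt_trichotomy i j with h'' | h'' | h''
            · rw [IH i (by omega) h']; ring
            · exact absurd h'' hij
            · rw [hmin j' (by omega)]; ring
          · rw [if_neg hcond]
        rw [Finset.sum_eq_add_of_mem l j hl_mem hj_mem (by omega) houter] at hs
        rw [Finset.sum_eq_single_of_mem j hj_mem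
            (fun j' _ hne => if_neg (by omega)),
          Finset.sum_eq_single_of_mem l hl_mem
            (fun j' _ hne => if_neg (by omega)), if_pos rfl, if_pos (by omega)] at hs
        have hdl : ((2 * k - 2 - l : ℕ) : ℂ) = ((2 * k - 2 : ℕ) : ℂ) - (l : ℂ) := by
          rw [Nat.cast_sub (by omega)]
        have hdj : ((2 * k - 2 - j : ℕ) : ℂ) = ((2 * k - 2 : ℕ) : ℂ) - (j : ℂ) := by
          rw [Nat.cast_sub (by omega)]
        rw [hdl, hdj] at hs
        have hx : ((j : ℂ) - (l : ℂ)) ≠ 0 := by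
          rw [sub_ne_zero]
          exact_mod_cast (by omega : j ≠ l)
        have h2 : a l * a j * (-(((j : ℂ) - (l : ℂ)) ^ 2)) = 0 := by
          linear_combination hs
        have h3 : a l * a j = 0 := by
          rcases mul_eq_zero.mp h2 with h' | h'
          · exact h'
          · exact absurd (neg_eq_zero.mp h') (pow_ne_zero 2 hx)
        exact (mul_eq_zero.mp h3).resolve_left hl
    -- l = k - 1
    have hlk : l = k - 1 := by
      have h1 : a (2 * k - 2 - l) = starRingEnd ℂ (a l) := ha_real l hl_le
      have h2 : a (2 * k - 2 - l) ≠ 0 := by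
        rw [h1]
        simpa using hl
      rcases lt_trichotomy (2 * k - 2 - l) l with h' | h' | h'
      · exact absurd (hmin _ h') h2
      · omega
      · exact absurd (hl_tail _ h') h2
    intro j hj
    rcases lt_trichotomy j l with h' | h' | h'
    · exact hmin j h'
    · exact absurd (h' ▸ hlk) hj
    · exact hl_tail j h'
end

section
/- For a positive real number r < 1 and integers k \ge s \ge 0, l with 0 \le l \le n, the s-th derivative of f_{k,l}(z) = z^k (\log(1/z))^l (for z on the ray z = r > 0) is a linear combination of the functions f_{k-s, l}, f_{k-s, l-1}, ..., f_{k-s, l-s} with coefficients of absolute value at most (2(k + l))^s; consequently |f_{k,l}^{(s)}(r)| \le (s+1)(2(k+l))^s r^{k-s} (\log(1/r))^l for 0 < r < 1/e. -/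
open Finset

private lemma hasDerivAt_flk (k' l' : ℕ) (hk : 1 ≤ k') {r : ℝ} (hr : 0 < r) :
    HasDerivAt (fun x : ℝ => x ^ k' * (Real.log (1 / x)) ^ l')
      ((k' : ℝ) * r ^ (k' - 1) * (Real.log (1 / r)) ^ l'
        - (l' : ℝ) * r ^ (k' - 1) * (Real.log (1 / r)) ^ (l' - 1)) r := by
  have hfun : (fun x : ℝ => Real.log (1 / x)) = fun x => -Real.log x := by
    funext x; rw [one_div, Real.log_inv]
  have hL : HasDerivAt (fun x : ℝ => Real.log (1 / x)) (-r⁻¹) r := by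
    rw [hfun]; exact (Real.hasDerivAt_log hr.ne').neg
  have hP : HasDerivAt (fun x : ℝ => (Real.log (1 / x)) ^ l')
      ((l' : ℝ) * (Real.log (1 / r)) ^ (l' - 1) * (-r⁻¹)) r := hL.pow l'
  have hpow : HasDerivAt (fun x : ℝ => x ^ k') ((k' : ℝ) * r ^ (k' - 1)) r :=
    hasDerivAt_pow k' r
  have h := hpow.mul hP
  refine h.congr_deriv ?_
  have hrk : r ^ k' = r ^ (k' - 1) * r := by
    rw [← pow_succ]; congr 1; omega
  rw [hrk]
  field_simp
  ring

/-- Derivative estimate of Lemma 7.2: for `f_{k,l}(r) = r^k (log(1/r))^l` and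
`k ≥ s ≥ 0`, `0 ≤ l ≤ n`, the `s`-th derivative of `f_{k,l}` is a linear combination
of `f_{k-s,l}, f_{k-s,l-1}, ..., f_{k-s,l-s}` with coefficients of absolute value at
most `(2(k+l))^s`; consequently `|f_{k,l}^{(s)}(r)| ≤ (s+1)(2(k+l))^s r^{k-s} (log(1/r))^l`
for `0 < r < 1/e`. -/
theorem stmt_19 (n k l s : ℕ) (hsk : s ≤ k) (hln : l ≤ n)
    (f : ℕ → ℕ → ℝ → ℝ)
    (hf : ∀ (k' l' : ℕ) (r : ℝ), f k' l' r = r ^ k' * (Real.log (1 / r)) ^ l') :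
    ∃ a : Fin (s + 1) → ℝ,
      (∀ j, |a j| ≤ (2 * (k + l) : ℝ) ^ s) ∧
      (∀ r : ℝ, 0 < r → r < 1 →
        iteratedDeriv s (f k l) r = ∑ j : Fin (s + 1), a j * f (k - s) (l - (j : ℕ)) r) ∧
      (∀ r : ℝ, 0 < r → r < Real.exp (-1) →
        |iteratedDeriv s (f k l) r|
          ≤ (s + 1 : ℝ) * (2 * (k + l) : ℝ) ^ s * r ^ (k - s) * (Real.log (1 / r)) ^ l) := by
  have hfe : ∀ k' l' : ℕ, f k' l' = fun x : ℝ => x ^ k' * (Real.log (1 / x)) ^ l' := by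
    intro k' l'; funext x; exact hf k' l' x
  -- main induction: the derivative formula holds for all r > 0
  have key : ∀ s' : ℕ, s' ≤ k → ∃ a : Fin (s' + 1) → ℝ,
      (∀ j, |a j| ≤ (2 * (k + l) : ℝ) ^ s') ∧
      (∀ r : ℝ, 0 < r →
        iteratedDeriv s' (f k l) r = ∑ j : Fin (s' + 1), a j * f (k - s') (l - (j : ℕ)) r) := by
    intro s'
    induction s' with
    | zero =>
      intro _
      refine ⟨fun _ => 1, fun j => by simp, fun r hr => by simp [iteratedDeriv_zero]⟩
    | succ m ih =>
      intro hm
      obtain ⟨a, ha, heq⟩ := ih (by omega)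
      set B : ℝ := (2 * (k + l) : ℝ) ^ m with hBdef
      have hB0 : 0 ≤ B := by positivity
      set a' : ℕ → ℝ := fun j => if h : j < m + 1 then a ⟨j, h⟩ else 0 with ha'def
      have ha'bound : ∀ j, |a' j| ≤ B := by
        intro j
        by_cases h : j < m + 1
        · simp only [ha'def, dif_pos h]; exact ha ⟨j, h⟩
        · simp only [ha'def, dif_neg h, abs_zero]; exact hB0
      set b' : ℕ → ℝ := fun j =>
        ((k - m : ℕ) : ℝ) * a' j -
          (if j = 0 then 0 else ((l - (j - 1) : ℕ) : ℝ) * a' (j - 1)) with hb'def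
      refine ⟨fun j => b' (j : ℕ), ?_, ?_⟩
      · -- coefficient bound
        intro j
        have h1 : |((k - m : ℕ) : ℝ) * a' (j : ℕ)| ≤ ((k - m : ℕ) : ℝ) * B := by
          rw [abs_mul, Nat.abs_cast]
          exact mul_le_mul_of_nonneg_left (ha'bound _) (by positivity)
        have h2 : |(if (j : ℕ) = 0 then (0:ℝ) else ((l - ((j:ℕ) - 1) : ℕ) : ℝ) * a' ((j:ℕ) - 1))|
            ≤ (l : ℝ) * B := by
          by_cases h : (j : ℕ) = 0
          · rw [if_pos h, abs_zero]; positivity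
          · rw [if_neg h, abs_mul, Nat.abs_cast]
            have hc : ((l - ((j:ℕ) - 1) : ℕ) : ℝ) ≤ (l : ℝ) := by
              exact_mod_cast Nat.sub_le l ((j:ℕ) - 1)
            exact mul_le_mul hc (ha'bound _) (abs_nonneg _) (by positivity)
        calc |b' (j : ℕ)| ≤ |((k - m : ℕ) : ℝ) * a' (j : ℕ)|
              + |(if (j : ℕ) = 0 then (0:ℝ)
                  else ((l - ((j:ℕ) - 1) : ℕ) : ℝ) * a' ((j:ℕ) - 1))| := abs_sub _ _
          _ ≤ ((k - m : ℕ) : ℝ) * B + (l : ℝ) * B := add_le_add h1 h2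
          _ = (((k - m : ℕ) : ℝ) + l) * B := by ring
          _ ≤ (2 * (k + l) : ℝ) * B := by
              apply mul_le_mul_of_nonneg_right _ hB0
              have : ((k - m : ℕ) : ℝ) ≤ (k : ℝ) := by exact_mod_cast Nat.sub_le k m
              push_cast
              nlinarith [Nat.cast_nonneg (α := ℝ) l, Nat.cast_nonneg (α := ℝ) k]
          _ = (2 * (k + l) : ℝ) ^ (m + 1) := by rw [pow_succ]; ring
      · -- derivative formula
        intro r hr0
        have hev : iteratedDeriv m (f k l) =ᶠ[nhds r]
            fun x => ∑ j : Fin (m + 1), a j * f (k - m) (l - (j : ℕ)) x := by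
          filter_upwards [Ioi_mem_nhds hr0] with x hx using heq x hx
        rw [iteratedDeriv_succ, hev.deriv_eq]
        set L : ℝ := Real.log (1 / r) with hLdef
        set g : ℕ → ℝ := fun t => r ^ (k - (m + 1)) * L ^ t with hgdef
        have hkk : k - m - 1 = k - (m + 1) := by omega
        have hder : HasDerivAt
            (fun x => ∑ j : Fin (m + 1), a j * f (k - m) (l - (j : ℕ)) x)
            (∑ j : Fin (m + 1), a j *
              (((k - m : ℕ) : ℝ) * g (l - (j : ℕ))
                - ((l - (j : ℕ) : ℕ) : ℝ) * g (l - (j : ℕ) - 1))) r := by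
          apply HasDerivAt.fun_sum
          intro j _
          have h := (hasDerivAt_flk (k - m) (l - (j : ℕ)) (by omega) hr0).const_mul (a j)
          rw [hfe]
          have hval : a j * (((k - m : ℕ) : ℝ) * g (l - (j : ℕ))
                - ((l - (j : ℕ) : ℕ) : ℝ) * g (l - (j : ℕ) - 1))
              = a j * (((k - m : ℕ) : ℝ) * r ^ (k - m - 1) * L ^ (l - (j : ℕ))
                - ((l - (j : ℕ) : ℕ) : ℝ) * r ^ (k - m - 1) * L ^ (l - (j : ℕ) - 1)) := by
            simp only [hgdef, hkk]; ring
          rw [hval]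
          exact h
        rw [hder.deriv]
        -- now the algebraic reindexing
        have hfg : ∀ t : ℕ, f (k - (m + 1)) t r = g t := by
          intro t; rw [hf, hgdef]
        have hax : ∀ j : Fin (m + 1), a j = a' (j : ℕ) := by
          intro j; simp only [ha'def, dif_pos j.isLt]
        calc ∑ j : Fin (m + 1), a j *
              (((k - m : ℕ) : ℝ) * g (l - (j : ℕ))
                - ((l - (j : ℕ) : ℕ) : ℝ) * g (l - (j : ℕ) - 1))
            = ∑ j ∈ range (m + 1), a' j *
              (((k - m : ℕ) : ℝ) * g (l - j) - ((l - j : ℕ) : ℝ) * g (l - j - 1)) := by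
              simp only [hax]
              exact Fin.sum_univ_eq_sum_range
                (fun j => a' j *
                  (((k - m : ℕ) : ℝ) * g (l - j) - ((l - j : ℕ) : ℝ) * g (l - j - 1))) (m + 1)
          _ = ∑ j ∈ range (m + 2), b' j * g (l - j) := by
              have e1 : ∑ j ∈ range (m + 2), b' j * g (l - j)
                  = ∑ j ∈ range (m + 2), ((k - m : ℕ) : ℝ) * a' j * g (l - j)
                    - ∑ j ∈ range (m + 2),
                      (if j = 0 then 0 else ((l - (j - 1) : ℕ) : ℝ) * a' (j - 1)) * g (l - j) := by
                rw [← Finset.sum_sub_distrib]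
                exact Finset.sum_congr rfl fun j _ => by simp only [hb'def]; ring
              have e2 : ∑ j ∈ range (m + 2), ((k - m : ℕ) : ℝ) * a' j * g (l - j)
                  = ∑ j ∈ range (m + 1), ((k - m : ℕ) : ℝ) * a' j * g (l - j) := by
                rw [Finset.sum_range_succ]
                have : a' (m + 1) = 0 := by simp [ha'def]
                simp [this]
              have e3 : ∑ j ∈ range (m + 2),
                    (if j = 0 then (0:ℝ) else ((l - (j - 1) : ℕ) : ℝ) * a' (j - 1)) * g (l - j)
                  = ∑ j ∈ range (m + 1), ((l - j : ℕ) : ℝ) * a' j * g (l - (j + 1)) := by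
                rw [Finset.sum_range_succ']
                simp
              rw [e1, e2, e3, ← Finset.sum_sub_distrib]
              refine (Finset.sum_congr rfl fun j _ => ?_).symm
              have : l - j - 1 = l - (j + 1) := by omega
              rw [this]; ring
          _ = ∑ j : Fin (m + 2), b' (j : ℕ) * f (k - (m + 1)) (l - (j : ℕ)) r := by
              simp only [hfg]
              exact (Fin.sum_univ_eq_sum_range (fun j => b' j * g (l - j)) (m + 2)).symm
  obtain ⟨a, ha, heq⟩ := key s hsk
  refine ⟨a, ha, fun r hr0 _ => heq r hr0, ?_⟩
  intro r hr0 hr1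
  set L : ℝ := Real.log (1 / r) with hLdef
  have hL1 : 1 ≤ L := by
    have : Real.log r < -1 := by
      have := Real.log_lt_log hr0 hr1
      rwa [Real.log_exp] at this
    have : 1 < -Real.log r := by linarith
    rw [hLdef, one_div, Real.log_inv]; linarith
  have hr1' : r < 1 := lt_trans hr1 (by
    calc Real.exp (-1) < Real.exp 0 := Real.exp_lt_exp.mpr (by norm_num)
      _ = 1 := Real.exp_zero)
  rw [heq r hr0]
  have hbound : ∀ j : Fin (s + 1),
      |a j * f (k - s) (l - (j : ℕ)) r| ≤ (2 * (k + l) : ℝ) ^ s * (r ^ (k - s) * L ^ l) := by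
    intro j
    rw [abs_mul, hf]
    have hfpos : |r ^ (k - s) * L ^ (l - (j : ℕ))| = r ^ (k - s) * L ^ (l - (j : ℕ)) := by
      rw [abs_of_nonneg]; positivity
    rw [hfpos]
    have h1 : r ^ (k - s) * L ^ (l - (j : ℕ)) ≤ r ^ (k - s) * L ^ l := by
      apply mul_le_mul_of_nonneg_left _ (by positivity)
      exact pow_le_pow_right₀ hL1 (Nat.sub_le l (j : ℕ))
    calc |a j| * (r ^ (k - s) * L ^ (l - (j : ℕ)))
        ≤ (2 * (k + l) : ℝ) ^ s * (r ^ (k - s) * L ^ (l - (j : ℕ))) :=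
          mul_le_mul_of_nonneg_right (ha j) (by positivity)
      _ ≤ (2 * (k + l) : ℝ) ^ s * (r ^ (k - s) * L ^ l) :=
          mul_le_mul_of_nonneg_left h1 (by positivity)
  calc |∑ j : Fin (s + 1), a j * f (k - s) (l - (j : ℕ)) r|
      ≤ ∑ j : Fin (s + 1), |a j * f (k - s) (l - (j : ℕ)) r| :=
        Finset.abs_sum_le_sum_abs _ _
    _ ≤ ∑ _j : Fin (s + 1), (2 * (k + l) : ℝ) ^ s * (r ^ (k - s) * L ^ l) :=
        Finset.sum_le_sum fun j _ => hbound j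
    _ = (s + 1 : ℝ) * (2 * (k + l) : ℝ) ^ s * r ^ (k - s) * L ^ l := by
        rw [Finset.sum_const, Finset.card_univ, Fintype.card_fin]
        push_cast; ring
end
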